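/- arXiv:1506.05405 — 12 statements merged into one kernel-verified Lean document; each statement's English description precedes it below -/
import Mathlib

section
/- Let a ≥ b > 1 be integers with ab ≥ 5, and let γ, η be the sequences defined by γ_0 = 0, η_0 = 1, γ_{j+1} = η_j − γ_j, η_{j+1} = ab·γ_{j+1} − η_j. Then for all j ≥ 0, the interleaving inequalities b·γ_j < η_j < b·γ_{j+1} hold. -/
theorem stmt_1 (a b : ℤ) (hab : a ≥ b) (hb : 1 < b) (h5 : a * b ≥ 5)
    (γ η : ℕ → ℤ) (hγ0 : γ 0 = 0) (hη0 : η 0 = 1)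
    (hγ : ∀ j, γ (j + 1) = η j - γ j)
    (hη : ∀ j, η (j + 1) = a * b * γ (j + 1) - η j) :
    ∀ j, b * γ j < η j ∧ η j < b * γ (j + 1) := by
  have ha : a ≥ 2 := by linarith
  have key : ∀ j, 0 < η j ∧ b * γ j < η j ∧ η j < b * γ (j + 1) := by
    intro j
    induction j with
    | zero =>
      have h1 := hγ 0
      rw [hγ0, hη0] at h1
      refine ⟨by rw [hη0]; norm_num, by rw [hγ0, hη0]; norm_num, ?_⟩
      rw [hη0, h1]; linarith
    | succ j ih =>
      obtain ⟨hpos, h1, h2⟩ := ih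
      have hgpos : 0 < γ (j + 1) := by nlinarith
      have hη1 := hη j
      have hγ2 := hγ (j + 1)
      refine ⟨by nlinarith, by nlinarith, ?_⟩
      rw [hγ2]; nlinarith [mul_pos (sub_pos.mpr hb) (sub_pos.mpr (show (1:ℤ) < a by linarith))]
  intro j; exact ⟨(key j).2.1, (key j).2.2⟩
end

section
/- Let a ≥ b > 1 be integers with ab ≥ 5, and let γ, η be defined by γ_0 = 0, η_0 = 1, γ_{j+1} = η_j − γ_j, η_{j+1} = ab·γ_{j+1} − η_j. Then for all j ≥ 0, the gaps are nondecreasing: η_{j+1} − b·γ_{j+1} ≥ b·γ_{j+1} − η_j ≥ η_j − b·γ_j. -/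
theorem stmt_2 (a b : ℤ) (hab : a ≥ b) (hb : 1 < b) (h5 : a * b ≥ 5)
    (γ η : ℕ → ℤ) (hγ0 : γ 0 = 0) (hη0 : η 0 = 1)
    (hγ : ∀ j, γ (j + 1) = η j - γ j)
    (hη : ∀ j, η (j + 1) = a * b * γ (j + 1) - η j) :
    ∀ j, η (j + 1) - b * γ (j + 1) ≥ b * γ (j + 1) - η j ∧
      b * γ (j + 1) - η j ≥ η j - b * γ j := by
  have key : ∀ j, 0 ≤ γ j ∧ 2 * γ j ≤ η j := by
    intro j
    induction j with
    | zero => simp [hγ0, hη0]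
    | succ n ih =>
      obtain ⟨h1, h2⟩ := ih
      constructor
      · rw [hγ]; linarith
      · rw [hη, hγ]; nlinarith
  intro j
  obtain ⟨h1, h2⟩ := key j
  obtain ⟨h1', h2'⟩ := key (j + 1)
  constructor
  · rw [hη]
    nlinarith [mul_nonneg (mul_nonneg (by linarith : (0:ℤ) ≤ b) (by linarith : (0:ℤ) ≤ a - 2)) h1']
  · rw [hγ]; nlinarith
end

section
/- Let a ≥ b > 1 be integers with ab ≥ 5, and let γ, η be defined as above. Then a·γ_j < η_j < a·γ_{j+1} for all j ≥ 0. -/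
theorem stmt_3 (a b : ℤ) (hab : a ≥ b) (hb : 1 < b) (h5 : a * b ≥ 5)
    (γ η : ℕ → ℤ) (hγ0 : γ 0 = 0) (hη0 : η 0 = 1)
    (hγ : ∀ j, γ (j + 1) = η j - γ j)
    (hη : ∀ j, η (j + 1) = a * b * γ (j + 1) - η j) :
    ∀ j, a * γ j < η j ∧ η j < a * γ (j + 1) := by
  have ha : 2 ≤ a := by linarith
  have key : ∀ j, 0 ≤ γ j ∧ a * γ j < η j ∧ η j < a * γ (j + 1) := by
    intro j
    induction j with
    | zero =>
      have h1 := hγ 0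
      refine ⟨by simp [hγ0], by simp [hγ0, hη0], ?_⟩
      rw [h1, hγ0, hη0]; linarith
    | succ n ih =>
      obtain ⟨h1, h2, h3⟩ := ih
      have hg1 : γ (n + 1) = η n - γ n := hγ n
      have he1 : η (n + 1) = a * b * γ (n + 1) - η n := hη n
      have hg2 : γ (n + 2) = η (n + 1) - γ (n + 1) := hγ (n + 1)
      have hgpos : 0 < γ (n + 1) := by nlinarith
      refine ⟨by linarith, ?_, ?_⟩
      · nlinarith [mul_pos (show (0:ℤ) < a by linarith) hgpos]
      · nlinarith [mul_pos (show (0:ℤ) < a by linarith) hgpos,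
          mul_le_mul_of_nonneg_right (show (1:ℤ) ≤ (a-1)*(b-1) by nlinarith)
            (le_of_lt hgpos),
          mul_lt_mul_of_pos_left h3 (show (0:ℤ) < a - 1 by linarith)]
  intro j
  exact ⟨(key j).2.1, (key j).2.2⟩
end

section
/- Let a, b be positive integers with ab ≥ 4, and let γ, η be the sequences with γ_0 = 0, γ_1 = 1, η_0 = 1, η_1 = ab−1, both satisfying X_j = (ab−2)X_{j−1} − X_{j−2}. Then for all d ≥ 0 and j ≥ 0, η_d divides γ_j if and only if (2d+1) divides j. -/
section aux

variable (t : ℤ) (γ : ℕ → ℤ)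

lemma aux_add (h0 : γ 0 = 0) (h1 : γ 1 = 1)
    (hrec : ∀ j, γ (j + 2) = t * γ (j + 1) - γ j) :
    ∀ m n, γ (m + n + 1) = γ (m + 1) * γ (n + 1) - γ m * γ n := by
  intro m
  induction m using Nat.strong_induction_on with
  | _ m ih =>
    match m with
    | 0 => intro n; simp [h0, h1]
    | 1 =>
      intro n
      have h2 : γ 2 = t := by have := hrec 0; simp [h0, h1] at this; linarith
      have : (1 : ℕ) + n + 1 = n + 2 := by omega
      rw [this, hrec n, h2, h1]; ring
    | (k + 2) =>
      intro n
      have i1' : γ (k + n + 2) = γ (k + 2) * γ (n + 1) - γ (k + 1) * γ n := by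
        have h := ih (k + 1) (by omega) n
        have a1 : k + 1 + n + 1 = k + n + 2 := by omega
        have a2 : k + 1 + 1 = k + 2 := by omega
        rw [a1, a2] at h
        exact h
      have i0' := ih k (by omega) n
      have g3 : γ (k + 2 + 1) = t * γ (k + 2) - γ (k + 1) := by
        have h := hrec (k + 1)
        have a : k + 1 + 2 = k + 2 + 1 := by omega
        have a2 : k + 1 + 1 = k + 2 := by omega
        rw [a, a2] at h
        exact h
      have e : (k + 2) + n + 1 = (k + n + 1) + 2 := by omega
      have e2 : k + n + 1 + 1 = k + n + 2 := by omega
      rw [e, hrec (k + n + 1), e2, i1', i0', g3, hrec k]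
      ring

lemma aux_pos (ht : 2 ≤ t) (h0 : γ 0 = 0) (h1 : γ 1 = 1)
    (hrec : ∀ j, γ (j + 2) = t * γ (j + 1) - γ j) :
    ∀ n, 0 ≤ γ n ∧ γ n < γ (n + 1) := by
  intro n
  induction n with
  | zero => simp [h0, h1]
  | succ k ihk =>
    obtain ⟨hk0, hk1⟩ := ihk
    refine ⟨by linarith, ?_⟩
    rw [hrec k]
    nlinarith

lemma aux_coprime (h0 : γ 0 = 0) (h1 : γ 1 = 1)
    (hrec : ∀ j, γ (j + 2) = t * γ (j + 1) - γ j) :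
    ∀ n, IsCoprime (γ n) (γ (n + 1)) := by
  intro n
  induction n with
  | zero =>
    have : γ (0 + 1) = 1 := h1
    rw [h0, this]
    exact isCoprime_zero_left.mpr isUnit_one
  | succ k ihk =>
    rw [hrec k]
    have : t * γ (k + 1) - γ k = -γ k + γ (k + 1) * t := by ring
    rw [this]
    exact (ihk.symm.neg_right).add_mul_left_right t

end aux

theorem stmt_7 (a b : ℤ) (ha : 0 < a) (hb : 0 < b) (hab : a * b ≥ 4)
    (γ η : ℕ → ℤ)
    (hγ0 : γ 0 = 0) (hγ1 : γ 1 = 1) (hη0 : η 0 = 1) (hη1 : η 1 = a * b - 1)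
    (hγ : ∀ j, γ (j + 2) = (a * b - 2) * γ (j + 1) - γ j)
    (hη : ∀ j, η (j + 2) = (a * b - 2) * η (j + 1) - η j) :
    ∀ d j : ℕ, (η d ∣ γ j ↔ (2 * d + 1) ∣ j) := by
  set t : ℤ := a * b - 2 with htdef
  have ht : 2 ≤ t := by omega
  have hadd := aux_add t γ hγ0 hγ1 hγ
  have hpos := aux_pos t γ ht hγ0 hγ1 hγ
  have hcop := aux_coprime t γ hγ0 hγ1 hγ
  have hmono : StrictMono γ := strictMono_nat_of_lt_succ (fun n => (hpos n).2)
  -- η d = γ (d+1) + γ d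
  have hηγ : ∀ d, η d = γ (d + 1) + γ d := by
    intro d
    induction d using Nat.strong_induction_on with
    | _ d ih =>
      match d with
      | 0 => simp [hη0, hγ0, hγ1]
      | 1 =>
        have h2 : γ 2 = t := by have := hγ 0; simp [hγ0, hγ1] at this; linarith
        rw [hη1, h2, hγ1]; ring
      | (k + 2) =>
        have g3 : γ (k + 2 + 1) = t * γ (k + 2) - γ (k + 1) := by
          have h := hγ (k + 1)
          have a : k + 1 + 2 = k + 2 + 1 := by omega
          have a2 : k + 1 + 1 = k + 2 := by omega
          rw [a, a2] at h
          exact h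
        have i1' : η (k + 1) = γ (k + 2) + γ (k + 1) := by
          have h := ih (k + 1) (by omega)
          have a2 : k + 1 + 1 = k + 2 := by omega
          rw [a2] at h
          exact h
        rw [hη k, i1', ih k (by omega), g3, hγ k]
        ring
  intro d
  -- positivity facts
  have hγ1le : ∀ s : ℕ, 1 ≤ s → 1 ≤ γ s := by
    intro s hs
    have := hmono.monotone hs
    rw [hγ1] at this; exact this
  have hηpos : 0 < η d := by
    rw [hηγ d]
    have h1 : 1 ≤ γ (d + 1) := hγ1le (d + 1) (by omega)
    have h2 : 0 ≤ γ d := (hpos d).1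
    linarith
  -- η d divides γ (2d+1)
  have hdvd21 : η d ∣ γ (2 * d + 1) := by
    have := hadd d d
    refine ⟨γ (d + 1) - γ d, ?_⟩
    have e : 2 * d + 1 = d + d + 1 := by omega
    rw [e, this, hηγ d]; ring
  -- γ (2d+1) divides γ ((2d+1)*k)
  have hdvdmul : ∀ k : ℕ, γ (2 * d + 1) ∣ γ ((2 * d + 1) * k) := by
    intro k
    induction k with
    | zero => simp [hγ0]
    | succ m ihm =>
      have e : (2 * d + 1) * (m + 1) = (2 * d + 1) * m + (2 * d) + 1 := by ring
      rw [e, hadd ((2 * d + 1) * m) (2 * d)]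
      exact dvd_sub (Dvd.dvd.mul_left dvd_rfl _) (Dvd.dvd.mul_right ihm _)
  -- nondivisibility for small indices
  have hsmall : ∀ s : ℕ, 1 ≤ s → s ≤ d → ¬ (η d ∣ γ s) := by
    intro s hs1 hsd hdvd
    have hpos_s : 0 < γ s := hγ1le s hs1
    have hle := Int.le_of_dvd hpos_s hdvd
    have h1 : γ s ≤ γ d := hmono.monotone hsd
    have h2 : 1 ≤ γ (d + 1) := hγ1le (d + 1) (by omega)
    rw [hηγ d] at hle
    linarith
  -- reflection: no divisibility for 1 ≤ j ≤ 2d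
  have hrefl : ∀ j : ℕ, 1 ≤ j → j ≤ 2 * d → ¬ (η d ∣ γ j) := by
    intro j hj1 hj2 hdvd
    by_cases hjd : j ≤ d
    · exact hsmall j hj1 hjd hdvd
    · -- d < j ≤ 2d, so s := 2d+1-j satisfies 1 ≤ s ≤ d
      push_neg at hjd
      obtain ⟨m, hm⟩ : ∃ m, j = m + 1 := ⟨j - 1, by omega⟩
      set s : ℕ := 2 * d + 1 - j with hsdef
      have hs1 : 1 ≤ s := by omega
      have hsd : s ≤ d := by omega
      have e : m + s + 1 = 2 * d + 1 := by omega
      have hid := hadd m s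
      rw [e, ← hm] at hid
      -- η d ∣ γ m * γ s
      have hdvd2 : η d ∣ γ m * γ s := by
        have : γ m * γ s = γ j * γ (s + 1) - γ (2 * d + 1) := by rw [hid]; ring
        rw [this]
        exact dvd_sub (Dvd.dvd.mul_right hdvd _) hdvd21
      -- IsCoprime (η d) (γ m)
      have hcop1 : IsCoprime (η d) (γ m) := by
        have h := hcop m
        rw [← hm] at h
        exact (h.of_isCoprime_of_dvd_right hdvd).symm
      have := hcop1.dvd_of_dvd_mul_left hdvd2
      exact hsmall s hs1 hsd this
  -- converse by strong induction
  have hconv : ∀ j : ℕ, η d ∣ γ j → (2 * d + 1) ∣ j := by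
    intro j
    induction j using Nat.strong_induction_on with
    | _ j ih =>
      intro hdvd
      rcases Nat.lt_or_ge j (2 * d + 1) with hlt | hge
      · rcases Nat.eq_zero_or_pos j with h0 | h1
        · simp [h0]
        · exact absurd hdvd (hrefl j h1 (by omega))
      · set m : ℕ := j - (2 * d + 1) with hmdef
        have e : 2 * d + m + 1 = j := by omega
        have hid := hadd (2 * d) m
        rw [e] at hid
        have hdvd2 : η d ∣ γ (2 * d) * γ m := by
          have : γ (2 * d) * γ m = γ (2 * d + 1) * γ (m + 1) - γ j := by
            rw [hid]; ring
          rw [this]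
          exact dvd_sub (Dvd.dvd.mul_right hdvd21 _) hdvd
        have hcop1 : IsCoprime (η d) (γ (2 * d)) := by
          have h := hcop (2 * d)
          exact (h.of_isCoprime_of_dvd_right hdvd21).symm
        have hdm : η d ∣ γ m := hcop1.dvd_of_dvd_mul_left hdvd2
        obtain ⟨q, hq⟩ := ih m (by omega) hdm
        refine ⟨q + 1, ?_⟩
        have hj : j = m + (2 * d + 1) := by omega
        rw [hj, hq]; ring
  intro j
  constructor
  · exact hconv j
  · rintro ⟨k, hk⟩
    rw [hk]
    exact hdvd21.trans (hdvdmul k)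
end

section
/- Let a, b be positive integers with ab ≥ 4, and let η be the sequence with η_0 = 1, η_1 = ab−1, η_j = (ab−2)η_{j−1} − η_{j−2}. Then for all d ≥ 0 and j ≥ 0, η_d divides η_j if and only if j ≡ d (mod 2d+1). -/
/-- Companion sequence: analog of 2*cosh(2nθ). -/
def Vseq (t : ℤ) : ℕ → ℤ
  | 0 => 2
  | 1 => t
  | n+2 => t * Vseq t (n+1) - Vseq t n

theorem stmt_8 (a b : ℤ) (ha : 0 < a) (hb : 0 < b) (hab : a * b ≥ 4)
    (η : ℕ → ℤ) (hη0 : η 0 = 1) (hη1 : η 1 = a * b - 1)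
    (hη : ∀ j, η (j + 2) = (a * b - 2) * η (j + 1) - η j) :
    ∀ d j : ℕ, (η d ∣ η j ↔ j ≡ d [MOD 2 * d + 1]) := by
  set t : ℤ := a * b - 2 with ht_def
  have ht : 2 ≤ t := by simp only [ht_def]; linarith
  have hη1' : η 1 = t + 1 := by rw [hη1]; simp only [ht_def]; ring
  -- positivity and strict monotonicity
  have hmono : ∀ j, 0 < η j ∧ η j < η (j+1) := by
    intro j
    induction j with
    | zero =>
      refine ⟨by rw [hη0]; norm_num, ?_⟩
      rw [hη0, hη1']; linarith
    | succ m ih =>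
      have h2 := hη m
      exact ⟨by nlinarith [ih.1, ih.2], by nlinarith [ih.1, ih.2]⟩
  have hsm : StrictMono η := strictMono_nat_of_lt_succ (fun m => (hmono m).2)
  -- reflection identity
  have R : ∀ n k, η (k + 2*n) + η k = Vseq t n * η (k + n) := by
    intro n
    induction n using Nat.strong_induction_on with
    | _ n ih =>
      match n with
      | 0 => intro k; simp [Vseq]; ring
      | 1 =>
        intro k
        have h3 := hη k
        rw [show k + 2*1 = k + 2 from by ring, show k + 1 = k + 1 from rfl,
          show Vseq t 1 = t from rfl]
        linarith
      | (m+2) =>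
        intro k
        have h1 := ih (m+1) (by omega) (k+1)
        have h2 := ih m (by omega) (k+2)
        have h3 := hη k
        have h4 := hη (k + 2*m + 2)
        rw [show k + 1 + 2*(m+1) = k + 2*m + 2 + 1 from by ring,
          show k + 1 + (m+1) = k + (m+2) from by ring] at h1
        rw [show k + 2 + 2*m = k + 2*m + 2 from by ring,
          show k + 2 + m = k + (m+2) from by ring] at h2
        rw [show k + 2*(m+2) = k + 2*m + 2 + 2 from by ring,
          show Vseq t (m+2) = t * Vseq t (m+1) - Vseq t m from rfl]
        have e6 : k + 2*m + 2 + 1 + 1 = k + 2*m + 2 + 2 := rfl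
        rw [e6] at h4
        linear_combination t*h1 - h2 + h4 + h3
  -- one-period step
  have perstep : ∀ d m, η d ∣ η (m + (2*d+1)) - η m := by
    intro d
    have base0 : η d ∣ η (2*d+1) - η 0 ∧ η d ∣ η (2*d+2) - η 1 := by
      match d with
      | 0 =>
        constructor <;> (rw [hη0]; exact one_dvd _)
      | (e+1) =>
        have r1 := R (e+1) 0
        have r2 := R e 1
        rw [zero_add, zero_add, show 2*(e+1) = 2*e+2 from by ring] at r1
        rw [show 1 + 2*e = 2*e+1 from by ring, show 1 + e = e + 1 from by ring] at r2
        have h4 := hη (2*e+1)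
        have h5 := hη (2*e+2)
        rw [show 2*e+1+2 = 2*e+3 from rfl, show 2*e+1+1 = 2*e+2 from rfl] at h4
        rw [show 2*e+2+2 = 2*e+4 from rfl, show 2*e+2+1 = 2*e+3 from rfl] at h5
        constructor
        · refine ⟨t * Vseq t (e+1) - Vseq t e, ?_⟩
          rw [show 2*(e+1)+1 = 2*e+3 from by ring, hη0]
          linear_combination h4 + t*r1 - r2 + hη1' - t*hη0
        · refine ⟨t * (t * Vseq t (e+1) - Vseq t e) - Vseq t (e+1), ?_⟩
          rw [show 2*(e+1)+2 = 2*e+4 from by ring]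
          linear_combination h5 + t*h4 + (t^2-1)*r1 - t*r2 + (t-1)*hη1' - (t^2-1)*hη0
    intro m
    induction m using Nat.strong_induction_on with
    | _ m ih =>
      match m with
      | 0 => simpa using base0.1
      | 1 =>
        have := base0.2
        rwa [show 2*d+2 = 1 + (2*d+1) from by ring] at this
      | (m+2) =>
        have h1 := ih (m+1) (by omega)
        have h2 := ih m (by omega)
        have h3 := hη m
        have h4 := hη (m + (2*d+1))
        rw [show m + (2*d+1) + 2 = m + 2 + (2*d+1) from by ring,
          show m + (2*d+1) + 1 = m + 1 + (2*d+1) from by ring] at h4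
        have : η (m+2+(2*d+1)) - η (m+2)
            = t * (η (m+1+(2*d+1)) - η (m+1)) - (η (m+(2*d+1)) - η m) := by
          linear_combination h4 - h3
        rw [this]
        exact dvd_sub (Dvd.dvd.mul_left h1 t) h2
  -- multi-period
  have per : ∀ d m q, η d ∣ η (m + q*(2*d+1)) - η m := by
    intro d m q
    induction q with
    | zero => simp
    | succ p ih =>
      have h1 := perstep d (m + p*(2*d+1))
      rw [show m + p*(2*d+1) + (2*d+1) = m + (p+1)*(2*d+1) from by ring] at h1
      have := dvd_add h1 ih
      simpa using this
  -- final assembly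
  intro d j
  have hdn : d % (2*d+1) = d := Nat.mod_eq_of_lt (by omega)
  have hj : j % (2*d+1) + (j / (2*d+1)) * (2*d+1) = j := Nat.mod_add_div' j (2*d+1)
  have key : η d ∣ η j - η (j % (2*d+1)) := by
    have := per d (j % (2*d+1)) (j / (2*d+1))
    rwa [hj] at this
  have hr : j % (2*d+1) < 2*d+1 := Nat.mod_lt _ (by omega)
  constructor
  · intro h
    have h2 : η d ∣ η (j % (2*d+1)) := (dvd_sub_right h).mp key
    show j % (2*d+1) = d % (2*d+1)
    rw [hdn]
    by_contra hne
    rcases lt_or_gt_of_ne hne with hlt | hgt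
    · have hle := Int.le_of_dvd (hmono _).1 h2
      have := hsm hlt
      linarith
    · -- d < j % (2d+1) ≤ 2d
      set r := j % (2*d+1) with hrdef
      have hr2 : r ≤ 2*d := by omega
      have rr := R (r - d) (2*d - r)
      rw [show (2*d - r) + 2*(r-d) = r from by omega,
        show (2*d - r) + (r - d) = d from by omega] at rr
      have h3 : η d ∣ η (2*d - r) := by
        have heq : η (2*d - r) = Vseq t (r-d) * η d - η r := by linarith
        rw [heq]
        exact dvd_sub (dvd_mul_left _ _) h2
      have hle := Int.le_of_dvd (hmono _).1 h3
      have : η (2*d - r) < η d := hsm (by omega)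
      linarith
  · intro h
    have hrd : j % (2*d+1) = d := by
      have h' : j % (2*d+1) = d % (2*d+1) := h
      rwa [hdn] at h'
    rw [hrd] at key
    have := dvd_add key (dvd_refl (η d))
    simpa using this
end

section
/- Let a, b be positive integers with ab > 4, and let γ, η be the sequences with γ_0 = 0, γ_1 = 1, η_0 = 1, η_1 = ab−1, both satisfying X_j = (ab−2)X_{j−1} − X_{j−2}. Then for d ≥ 1 and j ≥ 0, γ_d divides η_j if and only if d = 1. -/
private lemma stmt_9_aux (m : ℤ) (hm : 3 ≤ m) (γ η : ℕ → ℤ)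
    (hγ0 : γ 0 = 0) (hγ1 : γ 1 = 1) (hη0 : η 0 = 1) (hη1 : η 1 = m + 1)
    (hγ : ∀ j, γ (j + 2) = m * γ (j + 1) - γ j)
    (hη : ∀ j, η (j + 2) = m * η (j + 1) - η j) :
    ∀ d, 2 ≤ d → ∀ j, ¬ γ d ∣ η j := by
  -- γ is strictly increasing and nonnegative
  have base : ∀ j, 0 ≤ γ j ∧ γ j < γ (j + 1) := by
    intro j
    induction j with
    | zero => simp [hγ0, hγ1]
    | succ n ih =>
      obtain ⟨h0, h1⟩ := ih
      refine ⟨by linarith, ?_⟩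
      have := hγ n
      rw [show n + 1 + 1 = n + 2 from rfl, this]
      nlinarith
  have hpos : ∀ j, 0 ≤ γ j := fun j => (base j).1
  have hsm : StrictMono γ := strictMono_nat_of_lt_succ (fun n => (base n).2)
  have hγge1 : ∀ j, 1 ≤ γ (j + 1) := by
    intro j
    calc (1:ℤ) = γ 1 := hγ1.symm
    _ ≤ γ (j + 1) := hsm.monotone (by omega)
  -- η j = γ (j+1) + γ j
  have hsum : ∀ j, η j = γ (j + 1) + γ j := by
    have H : ∀ j, η j = γ (j + 1) + γ j ∧ η (j + 1) = γ (j + 2) + γ (j + 1) := by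
      intro j
      induction j with
      | zero =>
        constructor
        · rw [hη0, hγ1, hγ0]; ring
        · rw [hη1, hγ 0, hγ1, hγ0]; ring
      | succ n ih =>
        refine ⟨ih.2, ?_⟩
        have e1 := hη n
        have e2 := hγ (n + 1)
        have e3 := hγ n
        rw [show n + 1 + 1 = n + 2 from rfl] at *
        rw [show n + 1 + 2 = n + 3 from rfl] at *
        rw [show n + 2 + 1 = n + 3 from rfl] at *
        linear_combination e1 + m * ih.2 - ih.1 - e2 - e3
    exact fun j => (H j).1
  -- Catalan identity
  have cat : ∀ n, γ (n + 2) * γ n = γ (n + 1) ^ 2 - 1 := by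
    intro n
    induction n with
    | zero => rw [hγ0, hγ1]; ring
    | succ n ih =>
      have e1 : γ (n + 3) = m * γ (n + 2) - γ (n + 1) := hγ (n + 1)
      have e2 := hγ n
      show γ (n + 3) * γ (n + 1) = γ (n + 2) ^ 2 - 1
      linear_combination γ (n + 1) * e1 - γ (n + 2) * e2 + ih
  -- shift identity
  have S : ∀ k, (∀ n, η (n + 1 + k) = γ (k + 1) * η (n + 1) - γ k * η n) ∧
      (∀ n, η (n + 1 + (k + 1)) = γ (k + 2) * η (n + 1) - γ (k + 1) * η n) := by
    intro k
    induction k with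
    | zero =>
      constructor
      · intro n; rw [hγ1, hγ0]; ring
      · intro n
        have e2 : γ 2 = m := by rw [hγ 0, hγ1, hγ0]; ring
        rw [show n + 1 + (0 + 1) = n + 2 from by omega, hη n, e2, hγ1]; ring
    | succ k ih =>
      refine ⟨ih.2, ?_⟩
      intro n
      have h1 := ih.1 n
      have h2 := ih.2 n
      rw [show n + 1 + (k + 1 + 1) = (n + 1 + k) + 2 from by omega, hη (n + 1 + k)]
      rw [show n + 1 + k + 1 = n + 1 + (k + 1) from by omega, h2, h1]
      rw [show k + 1 + 1 + 1 = (k + 1) + 2 from by omega, hγ (k + 1)]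
      linear_combination η n * hγ k
  -- main argument
  intro d hd
  obtain ⟨e, rfl⟩ : ∃ e, d = e + 2 := ⟨d - 2, by omega⟩
  have hγd : 1 < γ (e + 2) := by
    have h2 : γ 2 = m := by rw [hγ 0, hγ1, hγ0]; ring
    calc (1:ℤ) < m := by linarith
    _ = γ 2 := h2.symm
    _ ≤ γ (e + 2) := hsm.monotone (by omega)
  intro j
  induction j using Nat.strong_induction_on with
  | _ j IH =>
    intro hdvd
    rcases lt_trichotomy j (e + 2) with hj | hj | hj
    · -- j < d
      rcases Nat.lt_or_ge j (e + 1) with hj2 | hj2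
      · -- j ≤ e : η j < γ d
        have hlt : η j < γ (e + 2) := by
          have m1 : γ (j + 1) ≤ γ (e + 1) := hsm.monotone (by omega)
          have m2 : γ j ≤ γ e := hsm.monotone (by omega)
          have := hγ e
          have he1 : γ e < γ (e + 1) := hsm (by omega)
          have he0 : 0 ≤ γ e := hpos e
          rw [hsum j]
          nlinarith
        have hpos' : 0 < η j := by
          rw [hsum j]
          have := hγge1 j
          have := hpos j
          linarith
        have := Int.le_of_dvd hpos' hdvd
        linarith
      · -- j = e + 1
        have hje : j = e + 1 := by omega
        subst hje
        have : γ (e + 2) ∣ γ (e + 1) := by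
          have h := hsum (e + 1)
          rw [show e + 1 + 1 = e + 2 from rfl] at h
          have : γ (e + 1) = η (e + 1) - γ (e + 2) := by linarith
          rw [this]
          exact dvd_sub hdvd dvd_rfl
        have hle := Int.le_of_dvd (by linarith [hγge1 e]) this
        have := hsm (show e + 1 < e + 2 from by omega)
        linarith
    · -- j = d
      subst hj
      have hS := (S (e + 1)).1 0
      rw [show 0 + 1 + (e + 1) = e + 2 from by omega, hη0, hη1] at hS
      have : γ (e + 2) ∣ γ (e + 1) := by
        have : γ (e + 1) * 1 = γ (e + 1 + 1) * (m + 1) - η (e + 2) := by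
          rw [show e + 1 + 1 = e + 2 from rfl]; linarith
        have h2 : γ (e + 1) = γ (e + 2) * (m + 1) - η (e + 2) := by
          rw [show e + 1 + 1 = e + 2 from rfl] at this; linarith
        rw [h2]
        exact dvd_sub (Dvd.dvd.mul_right dvd_rfl _) hdvd
      have hle := Int.le_of_dvd (by linarith [hγge1 e]) this
      have := hsm (show e + 1 < e + 2 from by omega)
      linarith
    · -- j > d : reduce
      set n := j - (e + 2) with hn
      have hn1 : 1 ≤ n := by omega
      have hS := (S (e + 2)).1 (n - 1)
      rw [show n - 1 + 1 + (e + 2) = j from by omega,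
          show n - 1 + 1 = n from by omega] at hS
      -- hS : η j = γ (e+3) * η n - γ (e+2) * η (n-1)
      have hd1 : γ (e + 2) ∣ γ (e + 2 + 1) * η n := by
        have : γ (e + 2 + 1) * η n = η j + γ (e + 2) * η (n - 1) := by linarith
        rw [this]
        exact dvd_add hdvd (Dvd.dvd.mul_right dvd_rfl _)
      obtain ⟨c, hc⟩ := hd1
      have hcat := cat (e + 1)
      have : γ (e + 2) ∣ η n := by
        refine ⟨γ (e + 2) * η n - γ (e + 1) * c, ?_⟩
        have hc' : γ (e + 1 + 2) * η n = γ (e + 2) * c := hc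
        linear_combination η n * hcat - γ (e + 1) * hc'
      exact IH n (by omega) this

theorem stmt_9 (a b : ℤ) (ha : 0 < a) (hb : 0 < b) (hab : a * b > 4)
    (γ η : ℕ → ℤ)
    (hγ0 : γ 0 = 0) (hγ1 : γ 1 = 1) (hη0 : η 0 = 1) (hη1 : η 1 = a * b - 1)
    (hγ : ∀ j, γ (j + 2) = (a * b - 2) * γ (j + 1) - γ j)
    (hη : ∀ j, η (j + 2) = (a * b - 2) * η (j + 1) - η j) :
    ∀ d j : ℕ, 1 ≤ d → (γ d ∣ η j ↔ d = 1) := by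
  have h5 : (5:ℤ) ≤ a * b := Int.add_one_le_iff.mpr hab
  have hm : (3:ℤ) ≤ a * b - 2 := by linarith
  have key := stmt_9_aux (a * b - 2) hm γ η hγ0 hγ1 hη0 (by linarith) hγ hη
  intro d j hd
  constructor
  · intro hdvd
    by_contra hne
    exact key d (by omega) j hdvd
  · intro h
    subst h
    rw [hγ1]
    exact one_dvd _
end

section
/- Let a, b be positive integers with ab ≥ 4. Define γ, η : ℤ → ℤ by the recurrence X_j = (ab−2)X_{j−1} − X_{j−2} with γ_0 = 0, γ_1 = 1, η_0 = 1, η_1 = ab−1, and set δ_j = η_j − η_{j−1}, ε_j = γ_{j+1} − γ_j. Then for all integers d ≥ 0 and all integers j: γ_d·δ_{j−d} = γ_j − γ_{j−2d}. -/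
/-- If a bilateral sequence satisfies a second-order linear recurrence and vanishes
at two consecutive points, it vanishes everywhere. -/
lemma recZero (c k : ℤ) (f : ℤ → ℤ)
    (hf : ∀ j : ℤ, f (j + 1) + f (j - 1) = c * f j)
    (h0 : f k = 0) (h1 : f (k + 1) = 0) : ∀ j : ℤ, f j = 0 := by
  have fwd : ∀ n : ℕ, f (k + n) = 0 ∧ f (k + n + 1) = 0 := by
    intro n
    induction n with
    | zero => simpa using ⟨h0, h1⟩
    | succ n ih =>
      have h2 := hf (k + n + 1)
      rw [show k + (n:ℤ) + 1 - 1 = k + n by ring] at h2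
      push_cast
      constructor
      · rw [show k + ((n:ℤ) + 1) = k + n + 1 by ring]; exact ih.2
      · rw [show k + ((n:ℤ) + 1) + 1 = k + n + 1 + 1 by ring]
        rw [ih.2] at h2; have := ih.1; linarith
  have bwd : ∀ n : ℕ, f (k - n) = 0 ∧ f (k - n + 1) = 0 := by
    intro n
    induction n with
    | zero => simpa using ⟨h0, h1⟩
    | succ n ih =>
      have h2 := hf (k - n)
      push_cast
      constructor
      · rw [show k - ((n:ℤ) + 1) = k - n - 1 by ring]
        rw [ih.1] at h2; have := ih.2; linarith
      · rw [show k - ((n:ℤ) + 1) + 1 = k - n by ring]; exact ih.1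
  intro j
  rcases le_total k j with h | h
  · have hn : k + ((j - k).toNat : ℤ) = j := by omega
    have := (fwd (j - k).toNat).1
    rwa [hn] at this
  · have hn : k - ((k - j).toNat : ℤ) = j := by omega
    have := (bwd (k - j).toNat).1
    rwa [hn] at this

theorem stmt_10 (a b : ℤ) (ha : 0 < a) (hb : 0 < b) (hab : a * b ≥ 4)
    (γ η : ℤ → ℤ)
    (hγ0 : γ 0 = 0) (hγ1 : γ 1 = 1) (hη0 : η 0 = 1) (hη1 : η 1 = a * b - 1)
    (hγ : ∀ j : ℤ, γ (j + 1) = (a * b - 2) * γ j - γ (j - 1))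
    (hη : ∀ j : ℤ, η (j + 1) = (a * b - 2) * η j - η (j - 1)) :
    ∀ d : ℤ, 0 ≤ d → ∀ j : ℤ,
      γ d * (η (j - d) - η (j - d - 1)) = γ j - γ (j - 2 * d) := by
  set c : ℤ := a * b - 2 with hc
  have hγ' : ∀ j : ℤ, γ (j + 1) + γ (j - 1) = c * γ j := fun j => by
    have := hγ j; linarith
  have hη' : ∀ j : ℤ, η (j + 1) + η (j - 1) = c * η j := fun j => by
    have := hη j; linarith
  -- γ is odd
  have hγodd : ∀ j : ℤ, γ (-j) = - γ j := by
    have hγm1 : γ (-1) = -1 := by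
      have := hγ 0
      rw [show (0:ℤ) + 1 = 1 by norm_num, show (0:ℤ) - 1 = -1 by norm_num] at this
      rw [hγ0, hγ1] at this; linarith
    have key : ∀ j : ℤ, (fun j => γ j + γ (-j)) j = 0 := by
      apply recZero c 0
      · intro j
        show γ (j + 1) + γ (-(j + 1)) + (γ (j - 1) + γ (-(j - 1))) = c * (γ j + γ (-j))
        have h1 := hγ' j
        have h2 := hγ' (-j)
        rw [show -j + 1 = -(j - 1) by ring, show -j - 1 = -(j + 1) by ring] at h2
        linarith
      · show γ 0 + γ (-0) = 0
        rw [neg_zero, hγ0]; ring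
      · show γ (0 + 1) + γ (-(0 + 1)) = 0
        rw [show (0:ℤ) + 1 = 1 by norm_num, show -(1:ℤ) = -1 by norm_num, hγ1, hγm1]
        ring
    intro j
    have := key j
    simp only at this
    linarith
  have hηm1 : η (-1) = -1 := by
    have := hη 0
    rw [show (0:ℤ) + 1 = 1 by norm_num, show (0:ℤ) - 1 = -1 by norm_num] at this
    rw [hη0, hη1] at this; linarith
  intro d _ j
  set f : ℤ → ℤ := fun j => γ d * (η (j - d) - η (j - d - 1)) - (γ j - γ (j - 2 * d))
    with hf_def
  have key : ∀ j : ℤ, f j = 0 := by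
    apply recZero c d
    · intro j
      simp only [hf_def]
      have h1 := hη' (j - d)
      have h2 := hη' (j - d - 1)
      have h3 := hγ' j
      have h4 := hγ' (j - 2 * d)
      rw [show j - d - 1 + 1 = j - d by ring] at h2
      rw [show j + 1 - d - 1 = j - d by ring, show j + 1 - d = j - d + 1 by ring,
        show j - 1 - d - 1 = j - d - 1 - 1 by ring, show j - 1 - d = j - d - 1 by ring,
        show j + 1 - 2 * d = j - 2 * d + 1 by ring,
        show j - 1 - 2 * d = j - 2 * d - 1 by ring]
      linear_combination γ d * h1 - γ d * h2 - h3 + h4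
    · simp only [hf_def]
      rw [show d - d - 1 = -1 by ring, show d - d = 0 by ring,
        show d - 2 * d = -d by ring, hη0, hηm1, hγodd d]
      ring
    · simp only [hf_def]
      rw [show d + 1 - d - 1 = 0 by ring, show d + 1 - d = 1 by ring,
        show d + 1 - 2 * d = -(d - 1) by ring, hη0, hη1, hγodd (d - 1)]
      have := hγ' d
      rw [hc] at this
      linarith
  have := key j
  simp only [hf_def] at this
  linarith
end

section
/- With the same setup (γ, η extended to ℤ by X_j = (ab−2)X_{j−1} − X_{j−2}, γ_0 = 0, γ_1 = 1, η_0 = 1, η_1 = ab−1; δ_j = η_j − η_{j−1}, ε_j = γ_{j+1} − γ_j), for all integers d ≥ 0 and all integers j: η_d·ε_{j−d−1} = γ_j − γ_{j−2d−1}. -/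
theorem stmt_11 (a b : ℤ) (ha : 0 < a) (hb : 0 < b) (hab : a * b ≥ 4)
    (γ η : ℤ → ℤ)
    (hγ0 : γ 0 = 0) (hγ1 : γ 1 = 1) (hη0 : η 0 = 1) (hη1 : η 1 = a * b - 1)
    (hγ : ∀ j : ℤ, γ (j + 1) = (a * b - 2) * γ j - γ (j - 1))
    (hη : ∀ j : ℤ, η (j + 1) = (a * b - 2) * η j - η (j - 1)) :
    ∀ d : ℤ, 0 ≤ d → ∀ j : ℤ,
      η d * (γ (j - d - 1 + 1) - γ (j - d - 1)) = γ j - γ (j - 2 * d - 1) := by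
  have hγ' : ∀ m : ℤ, γ m = (a * b - 2) * γ (m - 1) - γ (m - 2) := by
    intro m
    have := hγ (m - 1)
    rw [show m - 1 + 1 = m by ring, show m - 1 - 1 = m - 2 by ring] at this
    exact this
  set P : ℤ → Prop := fun d =>
    ∀ j : ℤ, η d * (γ (j - d - 1 + 1) - γ (j - d - 1)) = γ j - γ (j - 2 * d - 1)
    with hP
  have key : ∀ d : ℤ, 0 ≤ d → P d ∧ P (d + 1) := by
    refine Int.le_induction ?_ ?_
    ·
      constructor
      · intro j
        rw [hη0, show j - 0 - 1 + 1 = j by ring, show j - 0 - 1 = j - 1 by ring,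
          show j - 2 * 0 - 1 = j - 1 by ring]
        ring
      · intro j
        rw [show (0:ℤ) + 1 = 1 by ring, hη1, show j - 1 - 1 + 1 = j - 1 by ring,
          show j - 1 - 1 = j - 2 by ring, show j - 2 * 1 - 1 = j - 3 by ring]
        have h1 := hγ' j
        have h2 := hγ' (j - 1)
        rw [show j - 1 - 1 = j - 2 by ring, show j - 1 - 2 = j - 3 by ring] at h2
        linear_combination h2 - h1
    · intro n hn ih
      refine ⟨ih.2, ?_⟩
      intro j
      have hrec := hη (n + 1)
      rw [show n + 1 - 1 = n by ring] at hrec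
      have e1 := ih.2 (j - 1)
      rw [show j - 1 - (n + 1) - 1 + 1 = j - (n + 1 + 1) - 1 + 1 by ring,
        show j - 1 - (n + 1) - 1 = j - (n + 1 + 1) - 1 by ring,
        show j - 1 - 2 * (n + 1) - 1 = j - 2 * n - 4 by ring] at e1
      have e2 := ih.1 (j - 2)
      rw [show j - 2 - n - 1 + 1 = j - (n + 1 + 1) - 1 + 1 by ring,
        show j - 2 - n - 1 = j - (n + 1 + 1) - 1 by ring,
        show j - 2 - 2 * n - 1 = j - 2 * n - 3 by ring] at e2
      have h7 := hγ' (j - 2 * n - 3)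
      rw [show j - 2 * n - 3 - 1 = j - 2 * n - 4 by ring,
        show j - 2 * n - 3 - 2 = j - 2 * (n + 1 + 1) - 1 by ring] at h7
      linear_combination (γ (j - (n + 1 + 1) - 1 + 1) - γ (j - (n + 1 + 1) - 1)) * hrec +
        (a * b - 2) * e1 - e2 - hγ' j + h7
  intro d hd
  exact (key d hd).1
end

section
/- With the same setup, for all integers d ≥ 0 and all integers j: η_d·δ_{j−d} = η_j − η_{j−2d−1}, and ab·γ_d·ε_{j−d} = η_j − η_{j−2d}. -/
/-!
Both sides of each identity, read as functions of `j`, solve the recurrence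
`X (j + 1) = (a b - 2) X j - X (j - 1)`, and a solution is determined by two consecutive values.
Comparing two values reduces everything to `η j = γ (j + 1) + γ j` and the reflections
`γ (-j) = -γ j`, `η (-j - 1) = -η j`, which are proved by the same uniqueness principle.
-/

def IsChebyshevSolution {R : Type*} [CommRing R] (c : R) (f : ℤ → R) : Prop :=
  ∀ j, f (j + 1) = c * f j - f (j - 1)

namespace IsChebyshevSolution

variable {R : Type*} [CommRing R] {c : R} {f g : ℤ → R}

theorem sub_one_eq (hf : IsChebyshevSolution c f) (j : ℤ) : f (j - 1) = c * f j - f (j + 1) := by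
  rw [hf j]; ring

theorem add (hf : IsChebyshevSolution c f) (hg : IsChebyshevSolution c g) :
    IsChebyshevSolution c (fun j => f j + g j) := fun j => by
  dsimp only; rw [hf j, hg j]; ring

theorem sub (hf : IsChebyshevSolution c f) (hg : IsChebyshevSolution c g) :
    IsChebyshevSolution c (fun j => f j - g j) := fun j => by
  dsimp only; rw [hf j, hg j]; ring

theorem const_mul (hf : IsChebyshevSolution c f) (r : R) :
    IsChebyshevSolution c (fun j => r * f j) := fun j => by
  dsimp only; rw [hf j]; ring

theorem comp_add_const (hf : IsChebyshevSolution c f) (k : ℤ) :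
    IsChebyshevSolution c (fun j => f (j + k)) := fun j => by
  simpa only [add_right_comm, sub_add_eq_add_sub] using hf (j + k)

theorem comp_neg (hf : IsChebyshevSolution c f) : IsChebyshevSolution c (fun j => f (-j)) :=
  fun j => by dsimp only; rw [neg_add', neg_sub']; exact hf.sub_one_eq (-j)

theorem eq_of_eq_zero_one (hf : IsChebyshevSolution c f) (hg : IsChebyshevSolution c g)
    (h0 : f 0 = g 0) (h1 : f 1 = g 1) : f = g := by
  suffices h : ∀ j, f j = g j ∧ f (j + 1) = g (j + 1) from funext fun j => (h j).1
  intro j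
  induction j using Int.induction_on with
  | zero => exact ⟨h0, h1⟩
  | succ i ih =>
    refine ⟨ih.2, ?_⟩
    rw [hf, hg, add_sub_cancel_right, ih.1, ih.2]
  | pred i ih =>
    refine ⟨?_, by rw [sub_add_cancel]; exact ih.1⟩
    rw [hf.sub_one_eq, hg.sub_one_eq, ih.1, ih.2]

end IsChebyshevSolution

section Identities

open IsChebyshevSolution

variable {R : Type*} [CommRing R] {c : R} {γ η : ℤ → R}
  (hγ : IsChebyshevSolution c γ) (hη : IsChebyshevSolution c η)
  (hγ0 : γ 0 = 0) (hγ1 : γ 1 = 1) (hη0 : η 0 = 1) (hη1 : η 1 = c + 1)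
include hγ hγ0 hγ1

theorem gamma_neg (j : ℤ) : γ (-j) = -γ j := by
  have hγm1 : γ (-1) = -1 := by
    rw [show (-1 : ℤ) = 0 - 1 by norm_num, hγ.sub_one_eq, hγ0, zero_add, hγ1]; ring
  have h := hγ.comp_neg.eq_of_eq_zero_one (hγ.const_mul (-1))
    (by simp [hγ0]) (by simp [hγm1, hγ1])
  simpa using congrFun h j

include hη hη0 hη1

theorem eta_eq_gamma_add_one_add_gamma (j : ℤ) : η j = γ (j + 1) + γ j := by
  have h2 : γ 2 = c := by
    rw [show (2 : ℤ) = 1 + 1 by norm_num, hγ 1, sub_self, hγ0, hγ1]; ring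
  refine congrFun (hη.eq_of_eq_zero_one ((hγ.comp_add_const 1).add hγ) ?_ ?_) j
  · simp [hη0, hγ0, hγ1]
  · simp only [hη1, show (1 : ℤ) + 1 = 2 by norm_num, h2, hγ1]

theorem eta_neg_sub_one (j : ℤ) : η (-j - 1) = -η j := by
  rw [eta_eq_gamma_add_one_add_gamma hγ hη hγ0 hγ1 hη0 hη1,
    eta_eq_gamma_add_one_add_gamma hγ hη hγ0 hγ1 hη0 hη1, sub_add_cancel, ← neg_add',
    gamma_neg hγ hγ0 hγ1, gamma_neg hγ hγ0 hγ1]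
  ring

theorem eta_add_eta_sub_one (d : ℤ) : η d + η (d - 1) = (c + 2) * γ d := by
  rw [eta_eq_gamma_add_one_add_gamma hγ hη hγ0 hγ1 hη0 hη1,
    eta_eq_gamma_add_one_add_gamma hγ hη hγ0 hγ1 hη0 hη1, sub_add_cancel, hγ d]
  ring

theorem eta_mul_sub_eq (d j : ℤ) :
    η d * (η (j - d) - η (j - d - 1)) = η j - η (j - 2 * d - 1) := by
  have hrefl := eta_neg_sub_one hγ hη hγ0 hγ1 hη0 hη1
  have key : (fun i => η d * (η i - η (i + -1))) = fun i => η (i + d) - η (i + (-d - 1)) := by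
    refine ((hη.sub (hη.comp_add_const (-1))).const_mul _).eq_of_eq_zero_one
      ((hη.comp_add_const d).sub (hη.comp_add_const (-d - 1))) ?_ ?_
    · linear_combination (norm := ring_nf) -(η d) * hrefl 0 + hrefl d + 2 * η d * hη0
    · linear_combination (norm := ring_nf) hrefl (d - 1) - hη d + η d * hη1 - η d * hη0
  linear_combination (norm := ring_nf) congrFun key (j - d)

theorem add_two_mul_gamma_mul_sub_eq (d j : ℤ) :
    (c + 2) * γ d * (γ (j - d + 1) - γ (j - d)) = η j - η (j - 2 * d) := by
  have hrefl := eta_neg_sub_one hγ hη hγ0 hγ1 hη0 hη1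
  have hsum := eta_add_eta_sub_one hγ hη hγ0 hγ1 hη0 hη1 d
  have hγm1 : γ (-1) = -1 := by rw [gamma_neg hγ hγ0 hγ1, hγ1]
  have key : (fun i => (c + 2) * γ d * (γ i - γ (i + -1))) =
      fun i => η (i + (d - 1)) - η (i + (-d - 1)) := by
    refine ((hγ.sub (hγ.comp_add_const (-1))).const_mul _).eq_of_eq_zero_one
      ((hη.comp_add_const (d - 1)).sub (hη.comp_add_const (-d - 1))) ?_ ?_
    · linear_combination (norm := ring_nf)
        (c + 2) * γ d * hγ0 - (c + 2) * γ d * hγm1 + hrefl d - hsum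
    · linear_combination (norm := ring_nf)
        (c + 2) * γ d * hγ1 - (c + 2) * γ d * hγ0 + hrefl (d - 1) - hsum
  linear_combination (norm := ring_nf) congrFun key (j - d + 1)

end Identities

theorem stmt_12_general (a b : ℤ)
    (γ η : ℤ → ℤ)
    (hγ0 : γ 0 = 0) (hγ1 : γ 1 = 1) (hη0 : η 0 = 1) (hη1 : η 1 = a * b - 1)
    (hγ : ∀ j : ℤ, γ (j + 1) = (a * b - 2) * γ j - γ (j - 1))
    (hη : ∀ j : ℤ, η (j + 1) = (a * b - 2) * η j - η (j - 1)) :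
    ∀ d : ℤ, 0 ≤ d → ∀ j : ℤ,
      η d * (η (j - d) - η (j - d - 1)) = η j - η (j - 2 * d - 1) ∧
      a * b * γ d * (γ (j - d + 1) - γ (j - d)) = η j - η (j - 2 * d) := by
  have hη1' : η 1 = a * b - 2 + 1 := by rw [hη1]; ring
  intro d _ j
  refine ⟨eta_mul_sub_eq hγ hη hγ0 hγ1 hη0 hη1' d j, ?_⟩
  simpa using add_two_mul_gamma_mul_sub_eq hγ hη hγ0 hγ1 hη0 hη1' d j

theorem stmt_12 (a b : ℤ) (ha : 0 < a) (hb : 0 < b) (hab : a * b ≥ 4)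
    (γ η : ℤ → ℤ)
    (hγ0 : γ 0 = 0) (hγ1 : γ 1 = 1) (hη0 : η 0 = 1) (hη1 : η 1 = a * b - 1)
    (hγ : ∀ j : ℤ, γ (j + 1) = (a * b - 2) * γ j - γ (j - 1))
    (hη : ∀ j : ℤ, η (j + 1) = (a * b - 2) * η j - η (j - 1)) :
    ∀ d : ℤ, 0 ≤ d → ∀ j : ℤ,
      η d * (η (j - d) - η (j - d - 1)) = η j - η (j - 2 * d - 1) ∧
      a * b * γ d * (γ (j - d + 1) - γ (j - d)) = η j - η (j - 2 * d) :=
  stmt_12_general a b γ η hγ0 hγ1 hη0 hη1 hγ hη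
end

section
/- Let a, b be positive integers with ab > 4, and let γ, η be the sequences with γ_0 = 0, γ_1 = 1, η_0 = 1, η_1 = ab−1, satisfying X_j = (ab−2)X_{j−1} − X_{j−2}. Define ψ_+ = ((ab−2)+√(ab(ab−4)))/2, λ = ψ_+/(ψ_+ − 1), and μ = 1/√(ab(ab−4)). Then for all j ≥ 0: λ·ψ_+^j − 1.62 < η_j < λ·ψ_+^j and μ·ψ_+^j − 0.45 < γ_j < μ·ψ_+^j. -/
theorem stmt_14 (a b : ℤ) (ha : 0 < a) (hb : 0 < b) (hab : a * b > 4)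
    (γ η : ℕ → ℤ)
    (hγ0 : γ 0 = 0) (hγ1 : γ 1 = 1) (hη0 : η 0 = 1) (hη1 : η 1 = a * b - 1)
    (hγ : ∀ j, γ (j + 2) = (a * b - 2) * γ (j + 1) - γ j)
    (hη : ∀ j, η (j + 2) = (a * b - 2) * η (j + 1) - η j)
    (ψ lam μ : ℝ)
    (hψ : ψ = (((a * b : ℤ) : ℝ) - 2 + Real.sqrt ((a * b) * ((a * b) - 4))) / 2)
    (hlam : lam = ψ / (ψ - 1))
    (hμ : μ = 1 / Real.sqrt ((a * b) * ((a * b) - 4))) :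
    ∀ j : ℕ,
      lam * ψ ^ j - 1.62 < (η j : ℝ) ∧ (η j : ℝ) < lam * ψ ^ j ∧
      μ * ψ ^ j - 0.45 < (γ j : ℝ) ∧ (γ j : ℝ) < μ * ψ ^ j := by
  set N : ℝ := ((a * b : ℤ) : ℝ) with hNdef
  have hN : (5:ℝ) ≤ N := by
    have h5 : (5:ℤ) ≤ a * b := hab
    rw [hNdef]; exact_mod_cast h5
  set s : ℝ := Real.sqrt ((a*b) * ((a*b) - 4)) with hsdef
  have hcast : ((a:ℝ) * (b:ℝ)) * ((a:ℝ) * (b:ℝ) - 4) = N * (N - 4) := by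
    rw [hNdef]; push_cast; ring
  have hs0 : (0:ℝ) ≤ N * (N - 4) := by nlinarith
  have hssq : s ^ 2 = N * (N - 4) := by
    rw [hsdef, hcast, Real.sq_sqrt hs0]
  have hsnn : 0 ≤ s := Real.sqrt_nonneg _
  have hs2 : 2 < s := by nlinarith [sq_nonneg (s - 20/9)]
  set ψ' : ℝ := (N - 2 - s) / 2 with hψ'def
  have hψN : ψ = (N - 2 + s) / 2 := by rw [hψ]
  have hsum : ψ + ψ' = N - 2 := by rw [hψN, hψ'def]; ring
  have hmul : ψ * ψ' = 1 := by
    rw [hψN, hψ'def]; linear_combination (-1/4 : ℝ) * hssq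
  have hψ2 : 2 < ψ := by rw [hψN]; nlinarith
  have hψ'pos : 0 < ψ' := by nlinarith
  have hψ'lt1 : ψ' < 1 := by nlinarith
  have hψ1 : ψ - 1 ≠ 0 := by nlinarith
  have hspos : (0:ℝ) < s := by linarith
  have hμs : μ * s = 1 := by rw [hμ]; field_simp
  have hμpos : 0 < μ := by rw [hμ]; positivity
  have hμlt : μ < 0.45 := by
    rw [hμ, div_lt_iff₀ hspos]
    nlinarith [sq_nonneg (s - 20/9)]
  have hlam1 : 1 < lam := by
    rw [hlam, lt_div_iff₀ (by linarith)]; linarith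
  have hlam2 : lam < 2 := by
    rw [hlam, div_lt_iff₀ (by linarith)]; linarith
  have hlameq : lam * (ψ - 1) = ψ := by
    rw [hlam]; field_simp
  -- quadratic relations
  have hψsq : ψ ^ 2 = (N - 2) * ψ - 1 := by linear_combination ψ * hsum - hmul
  have hψ'sq : ψ' ^ 2 = (N - 2) * ψ' - 1 := by linear_combination ψ' * hsum - hmul
  -- closed forms
  have key : ∀ j : ℕ, ((γ j : ℝ) = μ * (ψ ^ j - ψ' ^ j) ∧
      (η j : ℝ) = lam * ψ ^ j - (lam - 1) * ψ' ^ j) ∧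
      ((γ (j+1) : ℝ) = μ * (ψ ^ (j+1) - ψ' ^ (j+1)) ∧
      (η (j+1) : ℝ) = lam * ψ ^ (j+1) - (lam - 1) * ψ' ^ (j+1)) := by
    intro j
    induction j with
    | zero =>
      constructor
      · constructor
        · rw [hγ0]; push_cast; ring
        · rw [hη0]; push_cast; ring
      · constructor
        · rw [hγ1]; push_cast
          have hd : ψ - ψ' = s := by rw [hψN, hψ'def]; ring
          linear_combination (-1 : ℝ) * hμs - μ * hd
        · have hc1 : ((η 1 : ℤ) : ℝ) = N - 1 := by
            rw [hη1, hNdef]; push_cast; ring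
          rw [hc1]
          have h : (N - 1) * (ψ - 1) = (lam * ψ ^ 1 - (lam - 1) * ψ' ^ 1) * (ψ - 1) := by
            linear_combination (ψ' - ψ) * hlameq - hψsq + hsum
          exact mul_right_cancel₀ hψ1 h
    | succ k ih =>
      obtain ⟨ih0, ih1⟩ := ih
      refine ⟨ih1, ?_, ?_⟩
      · have hrec : (γ (k+2) : ℝ) = (N - 2) * (γ (k+1) : ℝ) - (γ k : ℝ) := by
          rw [hγ k, hNdef]; push_cast; ring
        rw [hrec, ih1.1, ih0.1]
        linear_combination (μ * ψ' ^ k) * hψ'sq - (μ * ψ ^ k) * hψsq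
      · have hrec : (η (k+2) : ℝ) = (N - 2) * (η (k+1) : ℝ) - (η k : ℝ) := by
          rw [hη k, hNdef]; push_cast; ring
        rw [hrec, ih1.2, ih0.2]
        linear_combination ((lam - 1) * ψ' ^ k) * hψ'sq - (lam * ψ ^ k) * hψsq
  intro j
  obtain ⟨⟨hgj, hej⟩, _⟩ := key j
  have hψ'powpos : 0 < ψ' ^ j := pow_pos hψ'pos j
  have hψ'powle : ψ' ^ j ≤ 1 := pow_le_one₀ (le_of_lt hψ'pos) (le_of_lt hψ'lt1)
  have h1 : (lam - 1) * ψ' ^ j ≤ lam - 1 :=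
    mul_le_of_le_one_right (by linarith) hψ'powle
  have h2 : μ * ψ' ^ j ≤ μ := mul_le_of_le_one_right (le_of_lt hμpos) hψ'powle
  have h3 : 0 < (lam - 1) * ψ' ^ j := mul_pos (by linarith) hψ'powpos
  have h4 : 0 < μ * ψ' ^ j := mul_pos hμpos hψ'powpos
  refine ⟨?_, ?_, ?_, ?_⟩
  · rw [hej]; linarith
  · rw [hej]; linarith
  · rw [hgj]; linarith
  · rw [hgj]; linarith
end

section
/- Let a > 4 and b = 1, with γ, η as above. Then 0 = a·γ_0 < η_0 < η_1 < a·γ_1 < η_2 < a·γ_2 < η_3 < a·γ_3 < ⋯, i.e., η_1 < a·γ_1, and for all j ≥ 1, a·γ_j < η_{j+1} < a·γ_{j+1}. -/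
theorem stmt_16 (a : ℤ) (ha : 4 < a)
    (γ η : ℕ → ℤ)
    (hγ0 : γ 0 = 0) (hγ1 : γ 1 = 1) (hη0 : η 0 = 1) (hη1 : η 1 = a - 1)
    (hγ : ∀ j, γ (j + 2) = (a - 2) * γ (j + 1) - γ j)
    (hη : ∀ j, η (j + 2) = (a - 2) * η (j + 1) - η j) :
    a * γ 0 < η 0 ∧ η 0 < η 1 ∧ η 1 < a * γ 1 ∧
    ∀ j : ℕ, 1 ≤ j → a * γ j < η (j + 1) ∧ η (j + 1) < a * γ (j + 1) := by
  have Q : ∀ j, 0 < η j ∧ 2 * η j ≤ η (j + 1) := by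
    intro j
    induction j with
    | zero => rw [hη0, hη1]; omega
    | succ n ih =>
      obtain ⟨h1, h2⟩ := ih
      have h3 : 0 < η (n + 1) := by linarith
      refine ⟨h3, ?_⟩
      rw [hη n]
      nlinarith [mul_pos (show (0:ℤ) < a - 4 by omega) h3]
  have I : ∀ j, η (j + 1) + η j = a * γ (j + 1) := by
    have I2 : ∀ j, η (j + 1) + η j = a * γ (j + 1) ∧
        η (j + 2) + η (j + 1) = a * γ (j + 2) := by
      intro j
      induction j with
      | zero =>
        refine ⟨by rw [hη0, hη1, hγ1]; ring, ?_⟩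
        rw [hη 0, hγ 0, hη0, hη1, hγ0, hγ1]; ring
      | succ n ih =>
        obtain ⟨i1, i2⟩ := ih
        refine ⟨i2, ?_⟩
        rw [hη (n + 1), hγ (n + 1)]
        linear_combination (a - 2) * i2 - i1 + hη n
    exact fun j => (I2 j).1
  refine ⟨by rw [hγ0, hη0]; omega, by rw [hη0, hη1]; omega,
    by rw [hη1, hγ1]; omega, ?_⟩
  intro j hj
  obtain ⟨k, rfl⟩ : ∃ k, j = k + 1 := ⟨j - 1, by omega⟩
  have I1 := I k
  have I2 := I (k + 1)
  obtain ⟨p0, q0⟩ := Q k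
  obtain ⟨p1, q1⟩ := Q (k + 1)
  constructor
  · -- a * γ (k+1) = η (k+1) + η k < η (k+2)
    have : η k < η (k + 1) := by linarith
    linarith
  · linarith
end

section
/- Let a, b be integers with a ≥ b > 1 and ab ≥ 5. Let W be the subgroup of GL₂(ℤ) generated by w₁ = [[−1, b],[0,1]] and w₂ = [[1,0],[a,−1]] (acting on column vectors in the basis of simple roots α₁ = (1,0), α₂ = (0,1)), and let Δ^re = W·α₁ ∪ W·α₂ be the set of real roots. Then for any α, β ∈ Δ^re, α + β ∉ Δ^re. -/
/-!
The Weyl group preserves the invariant form `Q(x, y) = a x² - a b x y + b y²`, and, being a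
subgroup of `GL₂(ℤ)`, it preserves primitivity of vectors. So every real root `v` is primitive
with `Q v ∈ {a, b}`. If `α`, `β` and `α + β` were real roots, then `α` and `β` could not be
parallel: primitive parallel vectors are `±` each other, and neither `0` nor `2α` is primitive.
For non-parallel `α`, `β` the identity
`(Q(α + β) - Q α - Q β)² - 4 Q(α) Q(β) = a b (a b - 4) det(α, β)²`
makes the right side too large for values of `Q` in `{a, b}`.
-/

open Matrix

def Matrix.unitsStabilizer {n R β : Type*} [Fintype n] [DecidableEq n] [CommRing R]
    (f : (n → R) → β) : Subgroup (Matrix n n R)ˣ where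
  carrier := {g | ∀ v, f ((g : Matrix n n R) *ᵥ v) = f v}
  mul_mem' {g h} hg hh v := by rw [Units.val_mul, ← mulVec_mulVec, hg, hh]
  one_mem' v := by rw [Units.val_one, one_mulVec]
  inv_mem' {g} hg v := by
    rw [← hg, mulVec_mulVec, ← Units.val_mul, mul_inv_cancel, Units.val_one, one_mulVec]

theorem isCoprime_iff_exists_dotProduct_eq_one {R : Type*} [CommRing R] (v : Fin 2 → R) :
    IsCoprime (v 0) (v 1) ↔ ∃ u : Fin 2 → R, u ⬝ᵥ v = 1 := by
  simp only [IsCoprime, dotProduct, Fin.sum_univ_two]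
  exact ⟨fun ⟨s, t, h⟩ ↦ ⟨![s, t], h⟩, fun ⟨u, h⟩ ↦ ⟨u 0, u 1, h⟩⟩

theorem isCoprime_units_mulVec {R : Type*} [CommRing R] (g : (Matrix (Fin 2) (Fin 2) R)ˣ)
    {v : Fin 2 → R} (hv : IsCoprime (v 0) (v 1)) :
    IsCoprime (((g : Matrix (Fin 2) (Fin 2) R) *ᵥ v) 0)
      (((g : Matrix (Fin 2) (Fin 2) R) *ᵥ v) 1) := by
  obtain ⟨u, hu⟩ := (isCoprime_iff_exists_dotProduct_eq_one v).1 hv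
  refine (isCoprime_iff_exists_dotProduct_eq_one _).2
    ⟨u ᵥ* (g⁻¹ : (Matrix (Fin 2) (Fin 2) R)ˣ), ?_⟩
  rw [← dotProduct_mulVec, mulVec_mulVec, ← Units.val_mul, inv_mul_cancel, Units.val_one,
    one_mulVec, hu]

theorem exists_eq_smul_of_isCoprime_of_det_eq_zero {R : Type*} [CommRing R] {v w : Fin 2 → R}
    (hv : IsCoprime (v 0) (v 1)) (hdet : v 0 * w 1 - v 1 * w 0 = 0) : ∃ k : R, w = k • v := by
  obtain ⟨s, t, hst⟩ := hv
  refine ⟨s * w 0 + t * w 1, funext fun i ↦ ?_⟩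
  fin_cases i
  · simp only [Fin.zero_eta, Pi.smul_apply, smul_eq_mul]
    linear_combination (-w 0) * hst - t * hdet
  · simp only [Fin.mk_one, Pi.smul_apply, smul_eq_mul]
    linear_combination (-w 1) * hst + s * hdet

theorem det_ne_zero_of_isCoprime_add {v w : Fin 2 → ℤ} (hv : IsCoprime (v 0) (v 1))
    (hw : IsCoprime (w 0) (w 1)) (hvw : IsCoprime ((v + w) 0) ((v + w) 1)) :
    v 0 * w 1 - v 1 * w 0 ≠ 0 := by
  intro hdet
  obtain ⟨k, rfl⟩ := exists_eq_smul_of_isCoprime_of_det_eq_zero hv hdet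
  have hk : IsUnit k := hw.isUnit_of_dvd' (Dvd.intro _ rfl) (Dvd.intro _ rfl)
  rw [← one_smul ℤ v, smul_smul, mul_one, ← add_smul] at hvw
  have hk₁ : IsUnit (1 + k) := hvw.isUnit_of_dvd' (Dvd.intro _ rfl) (Dvd.intro _ rfl)
  rcases Int.isUnit_iff.1 hk with rfl | rfl <;> norm_num [Int.isUnit_iff] at hk₁

/-- Half the form of the symmetrized Cartan matrix `[[2a, -ab], [-ab, 2b]]`, in simple-root
coordinates. -/
def cartanForm (a b : ℤ) (v : Fin 2 → ℤ) : ℤ :=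
  a * v 0 ^ 2 - a * b * v 0 * v 1 + b * v 1 ^ 2

theorem cartanForm_polar_sq (a b : ℤ) (v w : Fin 2 → ℤ) :
    (cartanForm a b (v + w) - cartanForm a b v - cartanForm a b w) ^ 2
      - 4 * cartanForm a b v * cartanForm a b w
      = a * b * (a * b - 4) * (v 0 * w 1 - v 1 * w 0) ^ 2 := by
  simp only [cartanForm, Pi.add_apply]
  ring

theorem cartanForm_mulVec_reflection₁ (a b : ℤ) (v : Fin 2 → ℤ) :
    cartanForm a b (!![-1, b; 0, 1] *ᵥ v) = cartanForm a b v := by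
  simp only [cartanForm, mulVec_fin_two, of_apply, cons_val', cons_val_zero, cons_val_one,
    cons_val_fin_one]
  ring

theorem cartanForm_mulVec_reflection₂ (a b : ℤ) (v : Fin 2 → ℤ) :
    cartanForm a b (!![1, 0; a, -1] *ᵥ v) = cartanForm a b v := by
  simp only [cartanForm, mulVec_fin_two, of_apply, cons_val', cons_val_zero, cons_val_one,
    cons_val_fin_one]
  ring

theorem polar_sq_ne_of_mem_pair {a b p q r d : ℤ} (hab : a ≥ b) (hb : 1 < b)
    (hp : p = a ∨ p = b) (hq : q = a ∨ q = b) (hr : r = a ∨ r = b) (hd : d ≠ 0) :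
    (r - p - q) ^ 2 - 4 * p * q ≠ a * b * (a * b - 4) * d ^ 2 := by
  have hpb : b ≤ p := by rcases hp with rfl | rfl <;> omega
  have hqb : b ≤ q := by rcases hq with rfl | rfl <;> omega
  have hpolar : (r - p - q) ^ 2 ≤ (2 * a - b) ^ 2 := by
    apply sq_le_sq' <;> rcases hp with rfl | rfl <;> rcases hq with rfl | rfl <;>
      rcases hr with rfl | rfl <;> omega
  have hd2 : 1 ≤ d ^ 2 := sq_pos_of_ne_zero hd
  have hab4 : 0 ≤ a * b * (a * b - 4) := mul_nonneg (by nlinarith) (by nlinarith)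
  have hb2 : a ^ 2 * 4 ≤ a ^ 2 * b ^ 2 :=
    mul_le_mul_of_nonneg_left (by nlinarith) (sq_nonneg a)
  -- `(r - p - q)² ≤ (2a - b)² < 4b² + ab(ab - 4) ≤ 4pq + ab(ab - 4)d²`
  intro h
  nlinarith [mul_le_mul_of_nonneg_left hd2 hab4, mul_le_mul hpb hqb (by omega) (by omega)]

section RealRoots

variable {a b : ℤ} {w₁ w₂ : (Matrix (Fin 2) (Fin 2) ℤ)ˣ}

theorem closure_le_unitsStabilizer_cartanForm
    (h1 : (w₁ : Matrix (Fin 2) (Fin 2) ℤ) = !![-1, b; 0, 1])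
    (h2 : (w₂ : Matrix (Fin 2) (Fin 2) ℤ) = !![1, 0; a, -1]) :
    Subgroup.closure {w₁, w₂} ≤ unitsStabilizer (cartanForm a b) := by
  rw [Subgroup.closure_le, Set.insert_subset_iff, Set.singleton_subset_iff]
  exact ⟨fun v ↦ by rw [h1, cartanForm_mulVec_reflection₁],
    fun v ↦ by rw [h2, cartanForm_mulVec_reflection₂]⟩

theorem isCoprime_and_cartanForm_of_mem_closure
    (h1 : (w₁ : Matrix (Fin 2) (Fin 2) ℤ) = !![-1, b; 0, 1])
    (h2 : (w₂ : Matrix (Fin 2) (Fin 2) ℤ) = !![1, 0; a, -1])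
    {w : (Matrix (Fin 2) (Fin 2) ℤ)ˣ} (hw : w ∈ Subgroup.closure {w₁, w₂})
    {v : Fin 2 → ℤ}
    (hv : v = (w : Matrix (Fin 2) (Fin 2) ℤ) *ᵥ ![1, 0] ∨
      v = (w : Matrix (Fin 2) (Fin 2) ℤ) *ᵥ ![0, 1]) :
    IsCoprime (v 0) (v 1) ∧ (cartanForm a b v = a ∨ cartanForm a b v = b) := by
  have hQ := closure_le_unitsStabilizer_cartanForm h1 h2 hw
  rcases hv with rfl | rfl
  · exact ⟨isCoprime_units_mulVec w isCoprime_one_left,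
      Or.inl ((hQ _).trans (by simp [cartanForm]))⟩
  · exact ⟨isCoprime_units_mulVec w isCoprime_one_right,
      Or.inr ((hQ _).trans (by simp [cartanForm]))⟩

end RealRoots

theorem stmt_19_general (a b : ℤ) (hab : a ≥ b) (hb : 1 < b)
    (w₁ w₂ : (Matrix (Fin 2) (Fin 2) ℤ)ˣ)
    (h1 : (w₁ : Matrix (Fin 2) (Fin 2) ℤ) = !![-1, b; 0, 1])
    (h2 : (w₂ : Matrix (Fin 2) (Fin 2) ℤ) = !![1, 0; a, -1])
    (Δre : Set (Fin 2 → ℤ))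
    (hΔ : Δre = {v | ∃ w ∈ Subgroup.closure {w₁, w₂},
      v = (w : Matrix (Fin 2) (Fin 2) ℤ).mulVec ![1, 0] ∨
      v = (w : Matrix (Fin 2) (Fin 2) ℤ).mulVec ![0, 1]}) :
    ∀ α ∈ Δre, ∀ β ∈ Δre, α + β ∉ Δre := by
  subst hΔ
  rintro α ⟨wα, hwα, hα⟩ β ⟨wβ, hwβ, hβ⟩ ⟨wγ, hwγ, hγ⟩
  obtain ⟨hα₁, hα₂⟩ := isCoprime_and_cartanForm_of_mem_closure h1 h2 hwα hα
  obtain ⟨hβ₁, hβ₂⟩ := isCoprime_and_cartanForm_of_mem_closure h1 h2 hwβ hβ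
  obtain ⟨hγ₁, hγ₂⟩ := isCoprime_and_cartanForm_of_mem_closure h1 h2 hwγ hγ
  exact polar_sq_ne_of_mem_pair hab hb hα₂ hβ₂ hγ₂
    (det_ne_zero_of_isCoprime_add hα₁ hβ₁ hγ₁) (cartanForm_polar_sq a b α β)

theorem stmt_19 (a b : ℤ) (hab : a ≥ b) (hb : 1 < b) (h5 : a * b ≥ 5)
    (w₁ w₂ : (Matrix (Fin 2) (Fin 2) ℤ)ˣ)
    (h1 : (w₁ : Matrix (Fin 2) (Fin 2) ℤ) = !![-1, b; 0, 1])
    (h2 : (w₂ : Matrix (Fin 2) (Fin 2) ℤ) = !![1, 0; a, -1])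
    (Δre : Set (Fin 2 → ℤ))
    (hΔ : Δre = {v | ∃ w ∈ Subgroup.closure {w₁, w₂},
      v = (w : Matrix (Fin 2) (Fin 2) ℤ).mulVec ![1, 0] ∨
      v = (w : Matrix (Fin 2) (Fin 2) ℤ).mulVec ![0, 1]}) :
    ∀ α ∈ Δre, ∀ β ∈ Δre, α + β ∉ Δre :=
  stmt_19_general a b hab hb w₁ w₂ h1 h2 Δre hΔ
end
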